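/- arXiv:1309.5236 — 6 statements merged into one kernel-verified Lean document; each statement's English description precedes it below -/
import Mathlib

section
/- Let G be a finite group, let k ≥ 1, and let S = G × R_k be the right group over G. For a subset C ⊆ S, C generates S as a semigroup if and only if the Cayley digraph Cay(S,C) is strongly connected. -/
/-!
Reading the labels along a path from `u` to `v` in `Cay(S, C)` writes `v = u c₁ ⋯ cₙ` with
`cᵢ ∈ C`. So if `C` generates `S`, every `u` reaches every `u w`, and in a right group every `v`
has this form (`v = u (u⁻¹ v)`). Conversely, a loop at `s` has a first arc, labelled by some
`c ∈ C`, and a path from `c` to `s` exhibits `s` as a product of generators.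
-/

/-- Multiplication of the right group `G × R_k`: `(g, r_i) * (h, r_j) = (g * h, r_j)`. -/
def rgMul {G : Type*} [Mul G] {k : ℕ} (s t : G × Fin k) : G × Fin k :=
  (s.1 * t.1, t.2)

/-- Membership in the subsemigroup generated by `C` (w.r.t. the multiplication `mul`). -/
inductive SgClosure {S : Type*} (mul : S → S → S) (C : Set S) : S → Prop
  | base {c : S} : c ∈ C → SgClosure mul C c
  | mul {a b : S} : SgClosure mul C a → SgClosure mul C b → SgClosure mul C (mul a b)

def CayleyAdj {S : Type*} (mul : S → S → S) (C : Set S) (s t : S) : Prop :=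
  ∃ c ∈ C, mul s c = t

section CayleyDigraph

variable {S : Type*} {mul : S → S → S} {C : Set S}

theorem SgClosure.transGen_cayleyAdj_mul (assoc : ∀ a b c, mul (mul a b) c = mul a (mul b c))
    {w : S} (hw : SgClosure mul C w) (u : S) : Relation.TransGen (CayleyAdj mul C) u (mul u w) := by
  induction hw generalizing u with
  | base hc => exact .single ⟨_, hc, rfl⟩
  | @mul a b _ _ iha ihb =>
    rw [← assoc]
    exact (iha u).trans (ihb (mul u a))

theorem SgClosure.of_transGen_cayleyAdj {u v : S} (hu : SgClosure mul C u)
    (huv : Relation.TransGen (CayleyAdj mul C) u v) : SgClosure mul C v := by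
  induction huv with
  | single hadj =>
    obtain ⟨c, hc, rfl⟩ := hadj
    exact .mul hu (.base hc)
  | tail _ hadj ih =>
    obtain ⟨c, hc, rfl⟩ := hadj
    exact .mul ih (.base hc)

theorem transGen_cayleyAdj_of_forall_sgClosure
    (assoc : ∀ a b c, mul (mul a b) c = mul a (mul b c)) (hdiv : ∀ u v, ∃ w, mul u w = v)
    (h : ∀ s, SgClosure mul C s) (u v : S) : Relation.TransGen (CayleyAdj mul C) u v := by
  obtain ⟨w, rfl⟩ := hdiv u v
  exact (h w).transGen_cayleyAdj_mul assoc u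

theorem sgClosure_of_forall_transGen_cayleyAdj
    (h : ∀ u v, Relation.TransGen (CayleyAdj mul C) u v) (s : S) : SgClosure mul C s := by
  obtain ⟨t, ⟨c, hc, -⟩, -⟩ := Relation.TransGen.head'_iff.mp (h s s)
  exact SgClosure.of_transGen_cayleyAdj (.base hc) (h c s)

end CayleyDigraph

theorem rgMul_assoc {G : Type*} [Semigroup G] {k : ℕ} (a b c : G × Fin k) :
    rgMul (rgMul a b) c = rgMul a (rgMul b c) := by
  simp only [rgMul, mul_assoc]

theorem exists_rgMul_eq {G : Type*} [Group G] {k : ℕ} (u v : G × Fin k) :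
    ∃ w, rgMul u w = v :=
  ⟨(u.1⁻¹ * v.1, v.2), by simp [rgMul]⟩

theorem stmt1_general {G : Type*} [Group G] {k : ℕ}
    (C : Set (G × Fin k)) :
    (∀ s : G × Fin k, SgClosure rgMul C s) ↔
      (∀ u v : G × Fin k,
        Relation.TransGen (fun s t => ∃ c ∈ C, rgMul s c = t) u v) :=
  ⟨transGen_cayleyAdj_of_forall_sgClosure rgMul_assoc exists_rgMul_eq,
    sgClosure_of_forall_transGen_cayleyAdj⟩

/-- A subset `C` of the right group `S = G × R_k` generates `S` as a semigroup iff
the Cayley digraph `Cay(S, C)` is strongly connected. -/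
theorem stmt1 {G : Type*} [Group G] [Finite G] {k : ℕ} (hk : 1 ≤ k)
    (C : Set (G × Fin k)) :
    (∀ s : G × Fin k, SgClosure rgMul C s) ↔
      (∀ u v : G × Fin k,
        Relation.TransGen (fun s t => ∃ c ∈ C, rgMul s c = t) u v) :=
  stmt1_general C
end

section
/- Let S be a semigroup and C ⊆ S a subset such that the Cayley digraph Cay(S,C) is strongly connected. If g ∈ S satisfies g*s = s for some s ∈ S, then g*t = t for every t ∈ S. -/
theorem mul_mul_eq_of_mul_eq {S : Type*} [Semigroup S] {g s : S} (h : g * s = s) (c : S) :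
    g * (s * c) = s * c := by
  rw [← mul_assoc, h]

/-- If the Cayley digraph `Cay(S, C)` of a semigroup `S` is strongly connected and
left multiplication by `g` fixes some `s ∈ S`, then it fixes every element of `S`. -/
theorem stmt2 {S : Type*} [Semigroup S] (C : Set S)
    (hconn : ∀ u v : S, Relation.TransGen (fun s t => ∃ c ∈ C, s * c = t) u v)
    (g s : S) (hfix : g * s = s) :
    ∀ t : S, g * t = t := by
  intro t
  induction hconn s t with
  | single harc =>
    obtain ⟨c, -, rfl⟩ := harc
    exact mul_mul_eq_of_mul_eq hfix c
  | tail _ harc ih =>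
    obtain ⟨c, -, rfl⟩ := harc
    exact mul_mul_eq_of_mul_eq ih c
end

section
/- Let G be a finite group of order m with identity e, let k ≥ 1, and let C be a subset of the right group G × R_k on which the first projection is injective (for each a ∈ G there is at most one j with (a,r_j) ∈ C). Then the underlying graph of Cay(G×R_k, C) has exactly k·m vertices, and its number of edges E satisfies, as integers, 2·E = m·( Σ_{a ∈ π_G(C)} (2·k·c_a − c_{a⁻¹}) − c_e ). -/
/-- The underlying simple graph of the Cayley digraph `Cay(S, C)`
(w.r.t. the multiplication `mul`): distinct `s, t` are adjacent iff
`s * c = t` or `t * c = s` for some `c ∈ C`. -/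
def cayUGraph {S : Type*} (mul : S → S → S) (C : Set S) : SimpleGraph S where
  Adj s t := s ≠ t ∧ ∃ c ∈ C, mul s c = t ∨ mul t c = s
  symm := ⟨fun s t ⟨hne, c, hc, h⟩ => ⟨hne.symm, c, hc, h.symm⟩⟩
  loopless := ⟨fun s ⟨hne, _⟩ => hne rfl⟩

/-- `c_a`: the number of `j` with `(a, r_j) ∈ C`. -/
def cCount {G : Type*} [DecidableEq G] {k : ℕ} (C : Finset (G × Fin k)) (a : G) : ℕ :=
  (C.filter (fun p => p.1 = a)).card

/-!
Left multiplication by `s = (x, r_j)` is injective, so `s` has `|C|` out-neighbours. Since `t * c`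
forgets the `R_k`-coordinate of `t`, the in-neighbours of `s` are the vertices `(x c₁⁻¹, r_i)`
with `c ∈ C`, `c₂ = r_j` and `i` arbitrary; there are `k · |{c ∈ C | c₂ = r_j}|` of them because
`π_G` is injective on `C`. The two neighbourhoods meet in the images `s c` of the `c ∈ C` with
`(c₁⁻¹, r_j) ∈ C`, and their union contains `s` itself (a loop, discarded in the simple graph)
exactly when `(e, r_j) ∈ C`. The resulting degree does not depend on `x`; summing it over `j`
and applying the handshake lemma gives the formula.
-/

open Finset

theorem SimpleGraph.two_mul_ncard_edgeSet {V : Type*} [Fintype V] (Γ : SimpleGraph V)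
    [DecidableRel Γ.Adj] : 2 * Γ.edgeSet.ncard = ∑ v, Γ.degree v := by
  rw [← coe_edgeFinset, Set.ncard_coe_finset, sum_degrees_eq_twice_card_edges]

theorem neighborFinset_cayUGraph_eq_erase {S : Type*} [Fintype S] [DecidableEq S]
    (mul : S → S → S) (C : Set S) [DecidableRel (cayUGraph mul C).Adj] (s : S) (N : Finset S)
    (hN : ∀ t, t ∈ N ↔ ∃ c ∈ C, mul s c = t ∨ mul t c = s) :
    (cayUGraph mul C).neighborFinset s = N.erase s := by
  ext t
  rw [SimpleGraph.mem_neighborFinset, mem_erase, hN, ne_comm]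
  rfl

section RightGroup

variable {G : Type*} [Group G] {k : ℕ}

theorem rgMul_left_injective (s : G × Fin k) : Function.Injective (rgMul s) := fun _ _ h =>
  Prod.ext (mul_left_cancel (congrArg Prod.fst h)) (congrArg Prod.snd h :)

theorem rgMul_eq_iff {t c s : G × Fin k} :
    rgMul t c = s ↔ t.1 = s.1 * c.1⁻¹ ∧ c.2 = s.2 := by
  rw [rgMul, Prod.ext_iff, eq_mul_inv_iff_mul_eq]

theorem rgMul_eq_self_iff {s c : G × Fin k} : rgMul s c = s ↔ c = (1, s.2) := by
  rw [rgMul_eq_iff, eq_mul_inv_iff_mul_eq, mul_eq_left, Prod.ext_iff]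

variable [DecidableEq G] (C : Finset (G × Fin k))

def rgInNeighbors (s : G × Fin k) : Finset (G × Fin k) :=
  ({c ∈ C | c.2 = s.2}.image fun c => s.1 * c.1⁻¹) ×ˢ univ

theorem mem_rgInNeighbors {s t : G × Fin k} :
    t ∈ rgInNeighbors C s ↔ ∃ c ∈ C, rgMul t c = s := by
  simp only [rgInNeighbors, mem_product, mem_image, mem_filter, mem_univ, and_true,
    rgMul_eq_iff, and_assoc]
  exact exists_congr fun c => and_congr_right' (by rw [and_comm, eq_comm])

theorem card_rgInNeighbors (hinj : Set.InjOn Prod.fst (C : Set (G × Fin k))) (s : G × Fin k) :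
    #(rgInNeighbors C s) = #{c ∈ C | c.2 = s.2} * k := by
  rw [rgInNeighbors, card_product, card_univ, Fintype.card_fin, card_image_of_injOn]
  intro c hc d hd h
  exact hinj (mem_filter.1 hc).1 (mem_filter.1 hd).1 (inv_injective (mul_left_cancel h))

theorem card_image_rgMul_inter_rgInNeighbors (s : G × Fin k) :
    #(C.image (rgMul s) ∩ rgInNeighbors C s) = #{c ∈ C | (c.1⁻¹, s.2) ∈ C} := by
  rw [← filter_mem_eq_inter, filter_image, card_image_of_injective _ (rgMul_left_injective s)]
  congr 1
  refine filter_congr fun c _ => ?_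
  simp only [mem_rgInNeighbors, rgMul_eq_iff]
  simp only [rgMul, mul_right_inj]
  constructor
  · rintro ⟨b, hb, hcb, hb2⟩
    rwa [show b = (c.1⁻¹, s.2) from Prod.ext (inv_eq_iff_eq_inv.1 hcb.symm) hb2] at hb
  · exact fun hc => ⟨_, hc, (inv_inv c.1).symm, rfl⟩

theorem self_mem_image_rgMul_union_rgInNeighbors_iff (s : G × Fin k) :
    s ∈ C.image (rgMul s) ∪ rgInNeighbors C s ↔ ((1 : G), s.2) ∈ C := by
  simp only [mem_union, mem_image, mem_rgInNeighbors, rgMul_eq_self_iff, or_self, exists_eq_right]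

theorem degree_cayUGraph_rgMul [Fintype G] (hinj : Set.InjOn Prod.fst (C : Set (G × Fin k)))
    (s : G × Fin k) [DecidableRel (cayUGraph rgMul (C : Set (G × Fin k))).Adj] :
    ((cayUGraph rgMul (C : Set (G × Fin k))).degree s : ℤ) =
      #C + #{c ∈ C | c.2 = s.2} * k - #{c ∈ C | (c.1⁻¹, s.2) ∈ C}
        - if ((1 : G), s.2) ∈ C then 1 else 0 := by
  have hnbr := neighborFinset_cayUGraph_eq_erase rgMul (C : Set (G × Fin k)) s
    (C.image (rgMul s) ∪ rgInNeighbors C s) fun t => by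
      simp only [mem_union, mem_image, mem_rgInNeighbors, mem_coe, ← exists_or, ← and_or_left]
  have hunion := card_union_add_card_inter (C.image (rgMul s)) (rgInNeighbors C s)
  rw [card_image_of_injective _ (rgMul_left_injective s), card_rgInNeighbors C hinj,
    card_image_rgMul_inter_rgInNeighbors] at hunion
  rw [← SimpleGraph.card_neighborFinset_eq_degree, hnbr]
  by_cases hself : ((1 : G), s.2) ∈ C
  · have hs := (self_mem_image_rgMul_union_rgInNeighbors_iff C s).2 hself
    rw [card_erase_of_mem hs, Nat.cast_sub (card_pos.2 ⟨s, hs⟩), if_pos hself]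
    omega
  · have hs := mt (self_mem_image_rgMul_union_rgInNeighbors_iff C s).1 hself
    rw [erase_eq_of_notMem hs, if_neg hself]
    omega

end RightGroup

section Counting

variable {G : Type*} {k : ℕ} (C : Finset (G × Fin k))

theorem sum_card_filter_snd_eq : ∑ j, #{c ∈ C | c.2 = j} = #C :=
  (card_eq_sum_card_fiberwise fun _ _ => mem_univ _).symm

variable [DecidableEq G]

theorem cCount_eq_card_filter_mem (a : G) : cCount C a = #{j | (a, j) ∈ C} := by
  refine card_nbij' Prod.snd (fun j => (a, j)) ?_ ?_ ?_ ?_ <;> intro p <;> grind [cCount]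

theorem sum_cCount_image_fst : ∑ a ∈ C.image Prod.fst, cCount C a = #C :=
  (card_eq_sum_card_image _ _).symm

theorem sum_card_filter_inv_mem [Group G] :
    ∑ j, #{c ∈ C | (c.1⁻¹, j) ∈ C} = ∑ c ∈ C, cCount C c.1⁻¹ := by
  simp only [cCount_eq_card_filter_mem]
  exact (sum_card_bipartiteAbove_eq_sum_card_bipartiteBelow
    (fun (c : G × Fin k) j => (c.1⁻¹, j) ∈ C)).symm

end Counting

theorem sum_degree_cayUGraph_rgMul_fiber {G : Type*} [Group G] [Fintype G] [DecidableEq G]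
    {k : ℕ}    (C : Finset (G × Fin k)) (hinj : Set.InjOn Prod.fst (C : Set (G × Fin k)))
    [DecidableRel (cayUGraph rgMul (C : Set (G × Fin k))).Adj] (x : G) :
    ∑ j, ((cayUGraph rgMul (C : Set (G × Fin k))).degree (x, j) : ℤ) =
      (∑ a ∈ C.image Prod.fst, (2 * (k : ℤ) * cCount C a - cCount C a⁻¹))
        - cCount C 1 := by
  have hsnd : ∑ j, (#{c ∈ C | c.2 = j} : ℤ) = #C := by exact_mod_cast sum_card_filter_snd_eq C
  have hinv : ∑ j, (#{c ∈ C | (c.1⁻¹, j) ∈ C} : ℤ) =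
      ∑ a ∈ C.image Prod.fst, (cCount C a⁻¹ : ℤ) := by
    rw [sum_image hinj]
    exact_mod_cast sum_card_filter_inv_mem C
  have hone : ∑ j, (if ((1 : G), j) ∈ C then 1 else 0 : ℤ) = cCount C 1 := by
    rw [sum_boole, cCount_eq_card_filter_mem]
  have hfst : ∑ a ∈ C.image Prod.fst, (cCount C a : ℤ) = #C := by
    exact_mod_cast sum_cCount_image_fst C
  simp only [degree_cayUGraph_rgMul C hinj, sum_sub_distrib, sum_add_distrib, ← sum_mul,
    ← mul_sum, sum_const, card_univ, Fintype.card_fin, hsnd, hinv, hone, hfst]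
  ring

theorem stmt4_general {G : Type*} [Group G] [Fintype G] [DecidableEq G] {k : ℕ}
    (C : Finset (G × Fin k))
    (hinj : Set.InjOn Prod.fst (C : Set (G × Fin k))) :
    Nat.card (G × Fin k) = k * Fintype.card G ∧
      2 * ((cayUGraph rgMul (C : Set (G × Fin k))).edgeSet.ncard : ℤ) =
        (Fintype.card G : ℤ) *
          ((∑ a ∈ C.image Prod.fst,
              (2 * (k : ℤ) * cCount C a - cCount C a⁻¹)) - cCount C 1) := by
  classical
  refine ⟨by rw [Nat.card_eq_fintype_card, Fintype.card_prod, Fintype.card_fin, mul_comm], ?_⟩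
  have handshake := congrArg ((↑) : ℕ → ℤ)
    (cayUGraph rgMul (C : Set (G × Fin k))).two_mul_ncard_edgeSet
  push_cast at handshake
  rw [handshake, Fintype.sum_prod_type]
  simp only [sum_degree_cayUGraph_rgMul_fiber C hinj, sum_const, card_univ, nsmul_eq_mul]

/-- Edge count for `Cay(G × R_k, C)` when the first projection is injective on `C`:
`k·m` vertices and `2·E = m·( Σ_{a ∈ π_G(C)} (2·k·c_a − c_{a⁻¹}) − c_e )`. -/
theorem stmt4 {G : Type*} [Group G] [Fintype G] [DecidableEq G] {k : ℕ} (hk : 1 ≤ k)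
    (C : Finset (G × Fin k))
    (hinj : Set.InjOn Prod.fst (C : Set (G × Fin k))) :
    Nat.card (G × Fin k) = k * Fintype.card G ∧
      2 * ((cayUGraph rgMul (C : Set (G × Fin k))).edgeSet.ncard : ℤ) =
        (Fintype.card G : ℤ) *
          ((∑ a ∈ C.image Prod.fst,
              (2 * (k : ℤ) * cCount C a - cCount C a⁻¹)) - cCount C 1) :=
  stmt4_general C hinj
end

section
/- Let G be a finite group of order m with identity e, and let a₁, a₂, a₃ ∈ G be pairwise distinct elements with aᵢ ≠ e and aᵢ² = e for each i, such that aₓ·a_y ∉ {a₁,a₂,a₃} whenever x ≠ y. Let C = {(a₁,r₁),(a₂,r₂),(a₃,r₃)} ⊆ G × R₃. Then the underlying graph of Cay(G×R₃, C) has 3m vertices, is triangle-free, and its number of edges E satisfies 2·E = 15·m. -/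
namespace RightGroup

open SimpleGraph Finset

variable {G : Type*} [Group G] {k : ℕ} {A : Fin k → G}

abbrev cayleyGraph (A : Fin k → G) : SimpleGraph (G × Fin k) :=
  cayUGraph rgMul (Set.range fun i => (A i, i))

theorem cayleyGraph_adj (hA : ∀ i, A i * A i = 1) {g h : G} {i j : Fin k} :
    (cayleyGraph A).Adj (g, i) (h, j) ↔ (g, i) ≠ (h, j) ∧ (h = g * A j ∨ h = g * A i) := by
  simp only [cayleyGraph, cayUGraph, rgMul, Set.mem_range, exists_exists_eq_and, Prod.mk.injEq]
  constructor
  · rintro ⟨hne, l, ⟨rfl, rfl⟩ | ⟨rfl, rfl⟩⟩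
    · exact ⟨hne, .inl rfl⟩
    · exact ⟨hne, .inr (by rw [mul_assoc, hA, mul_one])⟩
  · rintro ⟨hne, rfl | rfl⟩
    · exact ⟨hne, j, .inl ⟨rfl, rfl⟩⟩
    · exact ⟨hne, i, .inr ⟨by rw [mul_assoc, hA, mul_one], rfl⟩⟩

theorem cayleyGraph_cliqueFree_three (hA : ∀ i, A i * A i = 1) (hA₁ : ∀ i, A i ≠ 1)
    (hprod : ∀ i j, A i ≠ A j → A i * A j ∉ Set.range A) : (cayleyGraph A).CliqueFree 3 := by
  have hrel : ∀ x y z, A x * A z ≠ A y := by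
    intro x y z h
    by_cases hxz : A x = A z
    · exact hA₁ y (by rw [← h, hxz, hA])
    · exact hprod x z hxz ⟨y, h.symm⟩
  classical
  intro t ht
  obtain ⟨u, v, w, huv, huw, hvw, -⟩ := is3Clique_iff.1 ht
  obtain ⟨g, i⟩ := u
  obtain ⟨h, j⟩ := v
  obtain ⟨f, l⟩ := w
  rw [cayleyGraph_adj hA] at huv huw hvw
  obtain ⟨-, huv⟩ := huv
  obtain ⟨-, huw⟩ := huw
  obtain ⟨-, hvw⟩ := hvw
  -- In each case the two paths from `(g, i)` to `(f, l)` give `g * A y = g * A x * A z`.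
  rcases huv with rfl | rfl <;> rcases huw with hf | hf <;> rcases hvw with hf' | hf' <;>
    exact hrel _ _ _ (mul_left_cancel (a := g) (by rw [← mul_assoc, ← hf', hf]))

theorem cayleyGraph_neighborFinset [Fintype G] [DecidableEq G] [DecidableRel (cayleyGraph A).Adj]
    (hA : ∀ i, A i * A i = 1) (hA₁ : ∀ i, A i ≠ 1) (g : G) (i : Fin k) :
    (cayleyGraph A).neighborFinset (g, i) =
      univ.image (fun j => (g * A j, j)) ∪ univ.image (fun j => (g * A i, j)) := by
  ext ⟨h, j⟩
  simp only [mem_neighborFinset, cayleyGraph_adj hA, mem_union, mem_image, mem_univ, true_and,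
    Prod.mk.injEq, exists_eq_right]
  have hne : ∀ x y, (g * A x, y) ≠ (g, i) := fun x _ he =>
    hA₁ x (mul_eq_left.1 (Prod.ext_iff.1 he).1)
  constructor
  · rintro ⟨-, rfl | rfl⟩
    exacts [.inl rfl, .inr rfl]
  · rintro (rfl | rfl)
    exacts [⟨(hne j j).symm, .inl rfl⟩, ⟨(hne i j).symm, .inr rfl⟩]

theorem cayleyGraph_degree [Fintype G] [DecidableEq G] [DecidableRel (cayleyGraph A).Adj]
    (hA : ∀ i, A i * A i = 1) (hA₁ : ∀ i, A i ≠ 1) (hinj : Function.Injective A)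
    (v : G × Fin k) : (cayleyGraph A).degree v = 2 * k - 1 := by
  obtain ⟨g, i⟩ := v
  have hinter : univ.image (fun j => (g * A j, j)) ∩ univ.image (fun j => (g * A i, j)) =
      {(g * A i, i)} := by
    ext ⟨h, j⟩
    simp only [mem_inter, mem_image, mem_univ, Prod.mk.injEq, true_and, exists_eq_right,
      mem_singleton]
    constructor
    · rintro ⟨h₁, rfl⟩
      exact ⟨rfl, hinj (mul_left_cancel h₁)⟩
    · rintro ⟨rfl, rfl⟩
      exact ⟨rfl, rfl⟩
  have hcard := card_union_add_card_inter (univ.image (fun j => (g * A j, j)))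
    (univ.image (fun j => (g * A i, j)))
  rw [hinter, card_image_of_injective _ (fun _ _ h => (Prod.ext_iff.1 h).2),
    card_image_of_injective _ (fun _ _ h => (Prod.ext_iff.1 h).2)] at hcard
  rw [← card_neighborFinset_eq_degree, cayleyGraph_neighborFinset hA hA₁]
  simp only [card_singleton, card_univ, Fintype.card_fin] at hcard
  omega

theorem two_mul_ncard_edgeSet_cayleyGraph [Fintype G]
    (hA : ∀ i, A i * A i = 1) (hA₁ : ∀ i, A i ≠ 1) (hinj : Function.Injective A) :
    2 * (cayleyGraph A).edgeSet.ncard = (2 * k - 1) * (k * Fintype.card G) := by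
  classical
  rw [← coe_edgeFinset, Set.ncard_coe_finset, ← sum_degrees_eq_twice_card_edges]
  simp [cayleyGraph_degree hA hA₁ hinj, mul_comm]

end RightGroup

/-- For three involutions `a₁, a₂, a₃` as in the statement and
`C = {(a₁,r₁), (a₂,r₂), (a₃,r₃)} ⊆ G × R₃`, the underlying graph of `Cay(G × R₃, C)`
has `3m` vertices, is triangle-free, and has `15m/2` edges. -/
theorem stmt9 {G : Type*} [Group G] [Fintype G]
    (a₁ a₂ a₃ : G)
    (hne : a₁ ≠ a₂ ∧ a₁ ≠ a₃ ∧ a₂ ≠ a₃)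
    (hinv : ∀ a ∈ ({a₁, a₂, a₃} : Set G), a ≠ 1 ∧ a ^ 2 = 1)
    (hprod : ∀ a ∈ ({a₁, a₂, a₃} : Set G), ∀ b ∈ ({a₁, a₂, a₃} : Set G),
      a ≠ b → a * b ∉ ({a₁, a₂, a₃} : Set G)) :
    Nat.card (G × Fin 3) = 3 * Fintype.card G ∧
      (cayUGraph rgMul
        ({(a₁, (0 : Fin 3)), (a₂, (1 : Fin 3)), (a₃, (2 : Fin 3))} :
          Set (G × Fin 3))).CliqueFree 3 ∧
      2 * (cayUGraph rgMul
        ({(a₁, (0 : Fin 3)), (a₂, (1 : Fin 3)), (a₃, (2 : Fin 3))} :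
          Set (G × Fin 3))).edgeSet.ncard = 15 * Fintype.card G := by
  set A : Fin 3 → G := ![a₁, a₂, a₃]
  have hC : ({(a₁, 0), (a₂, 1), (a₃, 2)} : Set (G × Fin 3)) = Set.range fun i => (A i, i) := by
    ext ⟨g, i⟩
    fin_cases i <;> simp [A, eq_comm]
  have hrange : Set.range A = {a₁, a₂, a₃} := by
    rw [Matrix.range_cons, Matrix.range_cons_cons_empty]
    rfl
  have hinj : Function.Injective A := by
    obtain ⟨h₁₂, h₁₃, h₂₃⟩ := hne
    simp only [A, Matrix.vecCons, Fin.cons_injective_iff]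
    simp [h₁₂, h₁₃, h₂₃, Function.Injective, eq_iff_true_of_subsingleton]
  rw [← hrange] at hinv hprod
  have hA₁ : ∀ i, A i ≠ 1 := fun i => (hinv _ ⟨i, rfl⟩).1
  have hA : ∀ i, A i * A i = 1 := fun i => sq (A i) ▸ (hinv _ ⟨i, rfl⟩).2
  rw [hC]
  refine ⟨by simp [mul_comm], RightGroup.cayleyGraph_cliqueFree_three hA hA₁
    fun i j => hprod _ ⟨i, rfl⟩ _ ⟨j, rfl⟩, ?_⟩
  rw [RightGroup.two_mul_ncard_edgeSet_cayleyGraph hA hA₁ hinj]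
  ring
end

section
/- Let G be a finite group of order m with identity e, and let a₁, a₂, a₃ ∈ G be pairwise distinct elements with aᵢ ≠ e and aᵢ² = e for each i, such that aₓ·a_y ∉ {a₁,a₂,a₃} whenever x ≠ y. Let C = {(a₁,r₁),(a₂,r₂),(a₃,r₂)} ⊆ G × R₂. Then the underlying graph of Cay(G×R₂, C) has 2m vertices, is triangle-free, and its number of edges E satisfies 2·E = 9·m. -/
open Finset

section RightGroup

variable {G : Type*} [Group G] {k : ℕ}

theorem cayUGraph_rgMul_adj_iff {C : Set (G × Fin k)} (hC : ∀ c ∈ C, c.1 ≠ 1 ∧ c.1 ^ 2 = 1)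
    {s t : G × Fin k} :
    (cayUGraph rgMul C).Adj s t ↔ ∃ c ∈ C, t.1 = s.1 * c.1 ∧ (t.2 = c.2 ∨ s.2 = c.2) := by
  have hsq : ∀ c ∈ C, c.1 * c.1 = 1 := fun c hc => by rw [← pow_two, (hC c hc).2]
  constructor
  · rintro ⟨-, c, hc, rfl | rfl⟩
    · exact ⟨c, hc, rfl, .inl rfl⟩
    · exact ⟨c, hc, by simp [rgMul, mul_assoc, hsq c hc], .inr rfl⟩
  · rintro ⟨c, hc, h1, h2⟩
    refine ⟨fun hst => (hC c hc).1 (by simpa [hst] using h1), c, hc, ?_⟩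
    rcases h2 with h2 | h2
    · exact .inl (Prod.ext h1.symm h2.symm)
    · exact .inr (Prod.ext (by simp [rgMul, h1, mul_assoc, hsq c hc]) h2.symm)

theorem cayUGraph_rgMul_cliqueFree_three {A : Set G} {C : Set (G × Fin k)}
    (hCA : ∀ c ∈ C, c.1 ∈ A) (hinv : ∀ a ∈ A, a ≠ 1 ∧ a ^ 2 = 1)
    (hprod : ∀ a ∈ A, ∀ b ∈ A, a ≠ b → a * b ∉ A) :
    (cayUGraph rgMul C).CliqueFree 3 := by
  have hC : ∀ c ∈ C, c.1 ≠ 1 ∧ c.1 ^ 2 = 1 := fun c hc => hinv _ (hCA c hc)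
  classical
  intro S hS
  obtain ⟨u, v, w, huv, huw, hvw, -⟩ := SimpleGraph.is3Clique_iff.1 hS
  obtain ⟨a, ha, hva, -⟩ := (cayUGraph_rgMul_adj_iff hC).1 huv
  obtain ⟨b, hb, hwb, -⟩ := (cayUGraph_rgMul_adj_iff hC).1 huw
  obtain ⟨c, hc, hwc, -⟩ := (cayUGraph_rgMul_adj_iff hC).1 hvw
  have hbac : b.1 = a.1 * c.1 := mul_left_cancel (by rw [← mul_assoc, ← hva, ← hwc, hwb])
  by_cases hac : a.1 = c.1
  · exact (hC b hb).1 (by rw [hbac, hac, ← pow_two, (hC c hc).2])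
  · exact hprod _ (hCA a ha) _ (hCA c hc) hac (hbac ▸ hCA b hb)

theorem cayUGraph_rgMul_degree [DecidableEq G] {C : Finset (G × Fin k)}
    (hC : ∀ c ∈ C, c.1 ≠ 1 ∧ c.1 ^ 2 = 1) (hfst : Set.InjOn Prod.fst (C : Set (G × Fin k)))
    (s : G × Fin k) [Fintype ((cayUGraph rgMul (C : Set (G × Fin k))).neighborSet s)] :
    (cayUGraph rgMul (C : Set (G × Fin k))).degree s =
      ∑ c ∈ C, if s.2 = c.2 then k else 1 := by
  have hnbr : (cayUGraph rgMul (C : Set (G × Fin k))).neighborFinset s = C.biUnion fun c =>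
      ({j | j = c.2 ∨ s.2 = c.2} : Finset (Fin k)).image fun j => (s.1 * c.1, j) := by
    ext t
    simp only [SimpleGraph.mem_neighborFinset, cayUGraph_rgMul_adj_iff hC, mem_biUnion, mem_image,
      mem_filter, mem_univ, true_and, mem_coe]
    refine exists_congr fun c => and_congr_right fun _ => ⟨?_, ?_⟩
    · exact fun ⟨h1, h2⟩ => ⟨t.2, h2, Prod.ext h1.symm rfl⟩
    · rintro ⟨j, h, rfl⟩
      exact ⟨rfl, h⟩
  rw [← SimpleGraph.card_neighborFinset_eq_degree, hnbr, card_biUnion]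
  · refine sum_congr rfl fun c _ => ?_
    rw [card_image_of_injective _ (Prod.mk_right_injective _)]
    split_ifs with h <;> simp [h, filter_eq']
  · intro c hc d hd hcd
    simp only [Function.onFun, disjoint_left, mem_image]
    rintro _ ⟨i, -, rfl⟩ ⟨j, -, hj⟩
    exact hcd (hfst hc hd (mul_left_cancel (congrArg Prod.fst hj).symm))

theorem sum_ite_eq_two_mul_sub_one (j : Fin k) :
    ∑ i : Fin k, (if i = j then k else 1) = 2 * k - 1 := by
  rw [← add_sum_erase _ _ (mem_univ j), if_pos rfl,
    sum_congr rfl fun i hi => if_neg (ne_of_mem_erase hi), sum_const, card_erase_of_mem (mem_univ j),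
    card_univ, Fintype.card_fin, smul_eq_mul, mul_one]
  have := j.pos
  omega

theorem two_mul_ncard_edgeSet_cayUGraph_rgMul [Fintype G] {C : Finset (G × Fin k)}
    (hC : ∀ c ∈ C, c.1 ≠ 1 ∧ c.1 ^ 2 = 1) (hfst : Set.InjOn Prod.fst (C : Set (G × Fin k))) :
    2 * (cayUGraph rgMul (C : Set (G × Fin k))).edgeSet.ncard =
      (2 * k - 1) * #C * Fintype.card G := by
  classical
  rw [Set.ncard_eq_toFinset_card', ← SimpleGraph.edgeFinset,
    ← SimpleGraph.sum_degrees_eq_twice_card_edges]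
  simp_rw [cayUGraph_rgMul_degree hC hfst]
  rw [Fintype.sum_prod_type]
  simp_rw [sum_comm (s := univ (α := Fin k)), sum_ite_eq_two_mul_sub_one, sum_const, card_univ,
    smul_eq_mul]
  ring

end RightGroup

/-- For three involutions `a₁, a₂, a₃` as in the statement and
`C = {(a₁,r₁), (a₂,r₂), (a₃,r₂)} ⊆ G × R₂`, the underlying graph of `Cay(G × R₂, C)`
has `2m` vertices, is triangle-free, and has `9m/2` edges. -/
theorem stmt10 {G : Type*} [Group G] [Fintype G]
    (a₁ a₂ a₃ : G)
    (hne : a₁ ≠ a₂ ∧ a₁ ≠ a₃ ∧ a₂ ≠ a₃)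
    (hinv : ∀ a ∈ ({a₁, a₂, a₃} : Set G), a ≠ 1 ∧ a ^ 2 = 1)
    (hprod : ∀ a ∈ ({a₁, a₂, a₃} : Set G), ∀ b ∈ ({a₁, a₂, a₃} : Set G),
      a ≠ b → a * b ∉ ({a₁, a₂, a₃} : Set G)) :
    Nat.card (G × Fin 2) = 2 * Fintype.card G ∧
      (cayUGraph rgMul
        ({(a₁, (0 : Fin 2)), (a₂, (1 : Fin 2)), (a₃, (1 : Fin 2))} :
          Set (G × Fin 2))).CliqueFree 3 ∧
      2 * (cayUGraph rgMul
        ({(a₁, (0 : Fin 2)), (a₂, (1 : Fin 2)), (a₃, (1 : Fin 2))} :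
          Set (G × Fin 2))).edgeSet.ncard = 9 * Fintype.card G := by
  classical
  obtain ⟨h12, h13, h23⟩ := hne
  set C : Finset (G × Fin 2) := {(a₁, 0), (a₂, 1), (a₃, 1)}
  have hCA : ∀ c ∈ (C : Set (G × Fin 2)), c.1 ∈ ({a₁, a₂, a₃} : Set G) := by simp [C]
  have hfst : Set.InjOn Prod.fst (C : Set (G × Fin 2)) := by
    simp [C, Set.InjOn, h12, h13, h23, h12.symm, h13.symm, h23.symm]
  have hcard : #C = 3 := by simp [C, h12, h13, h23]
  rw [show ({(a₁, 0), (a₂, 1), (a₃, 1)} : Set (G × Fin 2)) = C by simp [C]]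
  refine ⟨by simp [Nat.card_eq_fintype_card, mul_comm],
    cayUGraph_rgMul_cliqueFree_three hCA hinv hprod, ?_⟩
  rw [two_mul_ncard_edgeSet_cayUGraph_rgMul (fun c hc => hinv _ (hCA c hc)) hfst, hcard]
end

section
/- Let G be a group with identity e, and let a₁, a₂, a₃ ∈ G be pairwise distinct elements with aᵢ ≠ e and aᵢ² = e for each i, such that aₓ·a_y ∉ {a₁,a₂,a₃} whenever x ≠ y. Let C = {(a₁,r₁),(a₂,r₁),(a₃,r₁),(e,r₂)} ⊆ G × R₂. Then for every g ∈ G and every i ∈ {1,2,3}, the vertices (g,r₂) and (g·aᵢ, r₁) are adjacent in the underlying graph of Cay(G×R₂, C), and they have exactly one common neighbour, namely (g,r₁); in other words, the edge {(g,r₂),(g·aᵢ,r₁)} lies in exactly one triangle. -/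
namespace RightGroup

variable {G : Type*} [Group G]

/-- The connection set `(A × {r₁}) ∪ {(e, r₂)}` of `G × R₂`, with `r₁ = 0` and `r₂ = 1`. -/
def connSet (A : Set G) : Set (G × Fin 2) :=
  insert (1, 1) ((fun a => (a, 0)) '' A)

lemma connSet_insert_insert_singleton (a₁ a₂ a₃ : G) :
    ({(a₁, 0), (a₂, 0), (a₃, 0), (1, 1)} : Set (G × Fin 2)) = connSet {a₁, a₂, a₃} := by
  ext w
  simp only [connSet, Set.mem_insert_iff, Set.mem_singleton_iff, Set.image_insert_eq,
    Set.image_singleton]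
  tauto

variable {A : Set G}

lemma adj_one_iff {g : G} {w : G × Fin 2} :
    (cayUGraph rgMul (connSet A)).Adj (g, 1) w ↔ w = (g, 0) ∨ ∃ b ∈ A, w = (g * b, 0) := by
  obtain ⟨h, j⟩ := w
  simp only [cayUGraph, connSet, rgMul, Set.mem_insert_iff, Set.mem_image, ne_eq,
    Prod.mk.injEq, exists_eq_or_imp, exists_exists_and_eq_and, mul_one]
  constructor
  · rintro ⟨hne, (hgh | ⟨rfl, -⟩) | ⟨b, hb, ⟨hb', rfl⟩ | ⟨-, h01⟩⟩⟩
    · exact absurd hgh hne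
    · fin_cases j
      · exact Or.inl ⟨rfl, rfl⟩
      · exact absurd ⟨rfl, rfl⟩ hne
    · exact Or.inr ⟨b, hb, hb'.symm, rfl⟩
    · exact absurd h01 (by decide)
  · rintro (⟨rfl, rfl⟩ | ⟨b, hb, rfl, rfl⟩)
    · exact ⟨by simp, Or.inl (Or.inr ⟨rfl, trivial⟩)⟩
    · exact ⟨by simp, Or.inr ⟨b, hb, Or.inl ⟨rfl, rfl⟩⟩⟩

lemma eq_or_exists_of_adj_zero {h : G} {w : G × Fin 2}
    (hw : (cayUGraph rgMul (connSet A)).Adj (h, 0) w) :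
    w = (h, 1) ∨ ∃ c ∈ A, w.1 = h * c ∨ w.1 * c = h := by
  obtain ⟨-, c, hc, hmul⟩ := hw
  rcases hc with rfl | ⟨c, hc, rfl⟩
  · rcases hmul with hmul | hmul
    · exact Or.inl (by simpa [rgMul] using hmul.symm)
    · exact absurd (congrArg Prod.snd hmul) (by simp [rgMul])
  · rcases hmul with hmul | hmul
    · exact Or.inr ⟨c, hc, Or.inl (congrArg Prod.fst hmul).symm⟩
    · exact Or.inr ⟨c, hc, Or.inr (congrArg Prod.fst hmul)⟩

lemma ne_one_of_mul_not_mem (hA : ∀ x ∈ A, ∀ y ∈ A, x * y ∉ A) {a : G} (ha : a ∈ A) :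
    a ≠ 1 := by
  rintro rfl
  exact hA 1 ha 1 ha (by simpa using ha)

lemma adj_one_mul (g : G) {a : G} (ha : a ∈ A) :
    (cayUGraph rgMul (connSet A)).Adj (g, 1) (g * a, 0) :=
  adj_one_iff.2 (Or.inr ⟨a, ha, rfl⟩)

lemma adj_zero_mul (hA : ∀ x ∈ A, ∀ y ∈ A, x * y ∉ A) (g : G) {a : G} (ha : a ∈ A) :
    (cayUGraph rgMul (connSet A)).Adj (g * a, 0) (g, 0) :=
  ⟨by simpa using ne_one_of_mul_not_mem hA ha, (a, 0), Or.inr ⟨a, ha, rfl⟩, Or.inr rfl⟩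

lemma commonNeighbors_one_mul (hA : ∀ x ∈ A, ∀ y ∈ A, x * y ∉ A) (g : G) {a : G}
    (ha : a ∈ A) :
    (cayUGraph rgMul (connSet A)).commonNeighbors (g, 1) (g * a, 0) = {(g, 0)} := by
  ext w
  simp only [SimpleGraph.mem_commonNeighbors, Set.mem_singleton_iff]
  constructor
  · rintro ⟨hw₁, hw₀⟩
    rcases adj_one_iff.1 hw₁ with rfl | ⟨b, hb, rfl⟩
    · rfl
    rcases eq_or_exists_of_adj_zero hw₀ with hw | ⟨c, hc, hbc | hbc⟩
    · exact absurd (congrArg Prod.snd hw) (by simp)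
    · rw [mul_assoc, mul_left_cancel_iff] at hbc
      exact absurd (hbc ▸ hb) (hA a ha c hc)
    · rw [mul_assoc, mul_left_cancel_iff] at hbc
      exact absurd (hbc ▸ ha) (hA b hb c hc)
  · rintro rfl
    exact ⟨adj_one_iff.2 (Or.inl rfl), adj_zero_mul hA g ha⟩
end RightGroup

open RightGroup in
theorem stmt11_general {G : Type*} [Group G]
    (a₁ a₂ a₃ : G)
    (hinv : ∀ a ∈ ({a₁, a₂, a₃} : Set G), a ≠ 1 ∧ a ^ 2 = 1)
    (hprod : ∀ a ∈ ({a₁, a₂, a₃} : Set G), ∀ b ∈ ({a₁, a₂, a₃} : Set G),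
      a ≠ b → a * b ∉ ({a₁, a₂, a₃} : Set G)) :
    ∀ g : G, ∀ a ∈ ({a₁, a₂, a₃} : Set G),
      (cayUGraph rgMul
        ({(a₁, (0 : Fin 2)), (a₂, (0 : Fin 2)), (a₃, (0 : Fin 2)),
          ((1 : G), (1 : Fin 2))} : Set (G × Fin 2))).Adj
        (g, (1 : Fin 2)) (g * a, (0 : Fin 2)) ∧
      {w : G × Fin 2 |
          (cayUGraph rgMul
            ({(a₁, (0 : Fin 2)), (a₂, (0 : Fin 2)), (a₃, (0 : Fin 2)),
              ((1 : G), (1 : Fin 2))} : Set (G × Fin 2))).Adj (g, (1 : Fin 2)) w ∧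
          (cayUGraph rgMul
            ({(a₁, (0 : Fin 2)), (a₂, (0 : Fin 2)), (a₃, (0 : Fin 2)),
              ((1 : G), (1 : Fin 2))} : Set (G × Fin 2))).Adj (g * a, (0 : Fin 2)) w} =
        {(g, (0 : Fin 2))} := by
  have hA : ∀ x ∈ ({a₁, a₂, a₃} : Set G), ∀ y ∈ ({a₁, a₂, a₃} : Set G),
      x * y ∉ ({a₁, a₂, a₃} : Set G) := by
    intro x hx y hy hxy
    by_cases hxy_eq : x = y
    · subst hxy_eq
      rw [← pow_two, (hinv x hx).2] at hxy
      exact (hinv 1 hxy).1 rfl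
    · exact hprod x hx y hy hxy_eq hxy
  intro g a ha
  rw [connSet_insert_insert_singleton]
  exact ⟨adj_one_mul g ha, commonNeighbors_one_mul hA g ha⟩

/-- For `C = {(a₁,r₁), (a₂,r₁), (a₃,r₁), (e,r₂)} ⊆ G × R₂` with `a₁, a₂, a₃` three
involutions as in the statement: for each `g ∈ G` and `a ∈ {a₁,a₂,a₃}`, the vertices
`(g,r₂)` and `(g·a, r₁)` are adjacent in the underlying graph of `Cay(G × R₂, C)`, and
their set of common neighbours is exactly `{(g, r₁)}` (the edge lies in one triangle). -/
theorem stmt11 {G : Type*} [Group G]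
    (a₁ a₂ a₃ : G)
    (hne : a₁ ≠ a₂ ∧ a₁ ≠ a₃ ∧ a₂ ≠ a₃)
    (hinv : ∀ a ∈ ({a₁, a₂, a₃} : Set G), a ≠ 1 ∧ a ^ 2 = 1)
    (hprod : ∀ a ∈ ({a₁, a₂, a₃} : Set G), ∀ b ∈ ({a₁, a₂, a₃} : Set G),
      a ≠ b → a * b ∉ ({a₁, a₂, a₃} : Set G)) :
    ∀ g : G, ∀ a ∈ ({a₁, a₂, a₃} : Set G),
      (cayUGraph rgMul
        ({(a₁, (0 : Fin 2)), (a₂, (0 : Fin 2)), (a₃, (0 : Fin 2)),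
          ((1 : G), (1 : Fin 2))} : Set (G × Fin 2))).Adj
        (g, (1 : Fin 2)) (g * a, (0 : Fin 2)) ∧
      {w : G × Fin 2 |
          (cayUGraph rgMul
            ({(a₁, (0 : Fin 2)), (a₂, (0 : Fin 2)), (a₃, (0 : Fin 2)),
              ((1 : G), (1 : Fin 2))} : Set (G × Fin 2))).Adj (g, (1 : Fin 2)) w ∧
          (cayUGraph rgMul
            ({(a₁, (0 : Fin 2)), (a₂, (0 : Fin 2)), (a₃, (0 : Fin 2)),
              ((1 : G), (1 : Fin 2))} : Set (G × Fin 2))).Adj (g * a, (0 : Fin 2)) w} =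
        {(g, (0 : Fin 2))} :=
  stmt11_general a₁ a₂ a₃ hinv hprod
end
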